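/- Let λ ∈ ℂ with |λ| = 1, λ not a root of unity and λ² ≠ 1; let φ be normalized and symmetric; let q* ∈ ℂ[[t]] with q*(t) = 1 + q₂*t² + ... and s₀ = (1+2q₂*)/4 ≠ 0. With h, ψ as in the construction and w = φ_z·E( ψ/h − Π(ψ/h) ), one has ∇⁺( h·∇(w/φ_z) ) + ℰ(q*,φ)·φ_z = [ z·∂_z(S_{q*}(φ⁻,φ)) ]/z − ∇⁺( h·Π(ψ/h) ). -/

import Mathlib

/- Common setup: formal power series in two commuting variables `z, z̄` over `ℂ`,
represented by their coefficient functions, together with the operators of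
Treschev's linearizable billiard construction. -/

open scoped BigOperators

noncomputable section

namespace Treschev

/-- A formal power series `f = Σ_{j,k≥0} f_{j,k} z^j z̄^k`, given by its coefficients. -/
abbrev FPS : Type := ℕ → ℕ → ℂ

/-- A formal power series in one variable `t`, given by its coefficients. -/
abbrev OPS : Type := ℕ → ℂ

/-- Product of two formal power series (Cauchy product). -/
def fmul (f g : FPS) : FPS := fun j k =>
  ∑ a ∈ Finset.range (j + 1), ∑ b ∈ Finset.range (k + 1), f a b * g (j - a) (k - b)

/-- The constant series `1`. -/
def oneF : FPS := fun j k => if j = 0 ∧ k = 0 then 1 else 0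

/-- Powers of a formal power series. -/
def fpow (f : FPS) : ℕ → FPS
  | 0 => oneF
  | n + 1 => fmul f (fpow f n)

/-- Substitution of a two-variable series `u` with zero constant term into a
one-variable series `q` (the formula is the correct one whenever `u 0 0 = 0`). -/
def substOne (q : OPS) (u : FPS) : FPS := fun j k =>
  ∑ m ∈ Finset.range (j + k + 1), q m * fpow u m j k

/-- Substitution `F(u, v)` of two series with zero constant term into a two-variable
series `F` (the formula is the correct one whenever `u 0 0 = 0` and `v 0 0 = 0`). -/
def subst2 (F : FPS) (u v : FPS) : FPS := fun j k =>
  ∑ m ∈ Finset.range (j + k + 1), ∑ n ∈ Finset.range (j + k + 1),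
    F m n * fmul (fpow u m) (fpow v n) j k

/-- The Taylor series of `cos`. -/
def cosSeries : OPS := fun n => if n % 2 = 0 then (-1 : ℂ) ^ (n / 2) / (n.factorial : ℂ) else 0

/-- `(t₁ + t₂)/2` as a two-variable series. -/
def halfSum : FPS := fun j k =>
  if j = 1 ∧ k = 0 then (1 / 2 : ℂ) else if j = 0 ∧ k = 1 then (1 / 2 : ℂ) else 0

/-- `(t₁ − t₂)/2` as a two-variable series. -/
def halfDiff : FPS := fun j k =>
  if j = 1 ∧ k = 0 then (1 / 2 : ℂ) else if j = 0 ∧ k = 1 then (-(1 / 2) : ℂ) else 0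

/-- The generating function `S_q(t₁,t₂) = q((t₁+t₂)/2)·cos((t₁−t₂)/2)` as a
formal power series in `t₁, t₂`. -/
def Sq (q : OPS) : FPS := fmul (substOne q halfSum) (substOne cosSeries halfDiff)

/-- Formal partial derivative with respect to the first variable. -/
def d1 (f : FPS) : FPS := fun j k => ((j + 1 : ℕ) : ℂ) * f (j + 1) k

/-- Formal partial derivative with respect to the second variable. -/
def d2 (f : FPS) : FPS := fun j k => ((k + 1 : ℕ) : ℂ) * f j (k + 1)

/-- `f⁺`, with `(f⁺)_{j,k} = λ^{j−k} f_{j,k}`. -/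
def plus (l : ℂ) (f : FPS) : FPS := fun j k => l ^ ((j : ℤ) - (k : ℤ)) * f j k

/-- `f⁻`, with `(f⁻)_{j,k} = λ^{k−j} f_{j,k}`. -/
def minus (l : ℂ) (f : FPS) : FPS := fun j k => l ^ ((k : ℤ) - (j : ℤ)) * f j k

/-- `∇f = f⁻ − λ⁻¹ f`. -/
def nab (l : ℂ) (f : FPS) : FPS := minus l f - l⁻¹ • f

/-- `∇⁺f = f − λ f⁺`. -/
def nabPlus (l : ℂ) (f : FPS) : FPS := f - l • plus l f

/-- The average `[f] = Σ_j f_{j,j} (z z̄)^j`. -/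
def avg (f : FPS) : FPS := fun j k => if j = k then f j k else 0

/-- The projection `Π₊(f) = [z f]/z`. -/
def Pip (f : FPS) : FPS := fun j k => if k = j + 1 then f j k else 0

/-- The projection `Π(f) = [z̄ f]/z̄`. -/
def Pim (f : FPS) : FPS := fun j k => if j = k + 1 then f j k else 0

/-- `E⁺`, the partial inverse of `∇⁺`. -/
def Eplus (l : ℂ) (f : FPS) : FPS := fun j k =>
  if k = j + 1 then 0 else f j k / (1 - l ^ ((j : ℤ) - (k : ℤ) + 1))

/-- `E`, the partial inverse of `∇`. -/
def Emin (l : ℂ) (f : FPS) : FPS := fun j k =>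
  if j = k + 1 then 0 else f j k / (l ^ ((k : ℤ) - (j : ℤ)) - l⁻¹)

/-- `Ẽ`, with `Ẽ(f − f⁺) = f − [f]`. -/
def Etilde (l : ℂ) (f : FPS) : FPS := fun j k =>
  if j = k then 0 else f j k / (1 - l ^ ((j : ℤ) - (k : ℤ)))

/-- `f ∘ I`, where `I(z,z̄) = (z̄,z)`. -/
def swapI (f : FPS) : FPS := fun j k => f k j

/-- Multiplication by `z`. -/
def mulz (f : FPS) : FPS := fun j k => if j = 0 then 0 else f (j - 1) k

/-- Multiplication by `z̄`. -/
def mulzbar (f : FPS) : FPS := fun j k => if k = 0 then 0 else f j (k - 1)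

/-- Division by `z` (valid on series divisible by `z`). -/
def divz (f : FPS) : FPS := fun j k => f (j + 1) k

/-- Multiplicative inverse `1/h` (the geometric-series formula, which is the correct
inverse whenever `h 0 0 ≠ 0`). -/
def finv (h : FPS) : FPS := fun j k =>
  (h 0 0)⁻¹ * ∑ m ∈ Finset.range (j + k + 1),
    fpow (fun a b => if a = 0 ∧ b = 0 then 0 else -(h a b) * (h 0 0)⁻¹) m j k

/-- Quotient `f/h` of formal power series. -/
def fdiv (f h : FPS) : FPS := fmul f (finv h)

/-- `ℰ(q,φ) = ∂₂S_q(φ⁻,φ) + ∂₁S_q(φ,φ⁺)`. -/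
def Err (l : ℂ) (q : OPS) (φ : FPS) : FPS :=
  subst2 (d2 (Sq q)) (minus l φ) φ + subst2 (d1 (Sq q)) φ (plus l φ)

/-- `∂_φℰ(q,φ)(w) = ∂₁₂S_q(φ⁻,φ)w⁻ + ∂₂₂S_q(φ⁻,φ)w + ∂₁₁S_q(φ,φ⁺)w + ∂₁₂S_q(φ,φ⁺)w⁺`. -/
def dErr (l : ℂ) (q : OPS) (φ : FPS) (w : FPS) : FPS :=
  fmul (subst2 (d1 (d2 (Sq q))) (minus l φ) φ) (minus l w)
    + fmul (subst2 (d2 (d2 (Sq q))) (minus l φ) φ) w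
    + fmul (subst2 (d1 (d1 (Sq q))) φ (plus l φ)) w
    + fmul (subst2 (d1 (d2 (Sq q))) φ (plus l φ)) (plus l w)

/-- `h = ∂₁₂S_q(φ⁻,φ)·φ_z·φ_z⁻`. -/
def hFun (l : ℂ) (q : OPS) (φ : FPS) : FPS :=
  fmul (fmul (subst2 (d1 (d2 (Sq q))) (minus l φ) φ) (d1 φ)) (minus l (d1 φ))

/-- `ψ = −E⁺( ℰ(q,φ)·φ_z − Π₊(ℰ(q,φ)·φ_z) )`. -/
def psiFun (l : ℂ) (q : OPS) (φ : FPS) : FPS :=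
  -Eplus l (fmul (Err l q φ) (d1 φ) - Pip (fmul (Err l q φ) (d1 φ)))

/-- `w = φ_z·E( ψ/h − Π(ψ/h) )`. -/
def wFun (l : ℂ) (q : OPS) (φ : FPS) : FPS :=
  fmul (d1 φ)
    (Emin l (fdiv (psiFun l q φ) (hFun l q φ) - Pim (fdiv (psiFun l q φ) (hFun l q φ))))

/-- `κ = ∂₁₂S_q(φ⁻,φ)·(λ⁻¹ φ_z⁻ φ_z̄ − λ φ_z̄⁻ φ_z)`. -/
def kappaFun (l : ℂ) (q : OPS) (φ : FPS) : FPS :=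
  fmul (subst2 (d1 (d2 (Sq q))) (minus l φ) φ)
    (l⁻¹ • fmul (minus l (d1 φ)) (d2 φ) - l • fmul (minus l (d2 φ)) (d1 φ))

/-- `g = φ_z̄ / φ_z`. -/
def gFun (φ : FPS) : FPS := fdiv (d2 φ) (d1 φ)

/-- `R₁ = ( −[z̄·ℰ·φ_z̄] + [z̄·g·[z·ℰ·φ_z]/z] ) / ( λ·z·[κ] )`. -/
def R1Fun (l : ℂ) (q : OPS) (φ : FPS) : FPS :=
  l⁻¹ • fmul (finv (avg (kappaFun l q φ)))
    (divz (-avg (mulzbar (fmul (Err l q φ) (d2 φ)))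
      + avg (mulzbar (fmul (gFun φ) (divz (avg (mulz (fmul (Err l q φ) (d1 φ)))))))))

/-- `R₂ = (1/z)·[ z̄·ψ·(λ⁻¹g − λg⁻)·([κ]−κ)/(κ·[κ]) ]`. -/
def R2Fun (l : ℂ) (q : OPS) (φ : FPS) : FPS :=
  divz (avg (mulzbar
    (fmul (fmul (psiFun l q φ) (l⁻¹ • gFun φ - l • minus l (gFun φ)))
      (fmul (avg (kappaFun l q φ) - kappaFun l q φ)
        (finv (fmul (kappaFun l q φ) (avg (kappaFun l q φ))))))))

/-- `R₃ = [z·∂_z(S_q(φ⁻,φ))]/z − ∇⁺( h·Π(ψ/h) )`. -/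
def R3Fun (l : ℂ) (q : OPS) (φ : FPS) : FPS :=
  Pip (d1 (subst2 (Sq q) (minus l φ) φ))
    - nabPlus l (fmul (hFun l q φ) (Pim (fdiv (psiFun l q φ) (hFun l q φ))))

/-- `R₄ = ∂_z(ℰ(q,φ))·(w/φ_z) + R₃/φ_z`. -/
def R4Fun (l : ℂ) (q : OPS) (φ : FPS) : FPS :=
  fmul (d1 (Err l q φ)) (fdiv (wFun l q φ) (d1 φ)) + fdiv (R3Fun l q φ) (d1 φ)

/-- `φ = z + z̄ + O₃`. -/
def normalized (φ : FPS) : Prop :=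
  φ 0 0 = 0 ∧ φ 1 0 = 1 ∧ φ 0 1 = 1 ∧ φ 2 0 = 0 ∧ φ 1 1 = 0 ∧ φ 0 2 = 0

/-- The weighted norm `‖f‖_ρ = Σ_{j,k} |f_{j,k}| ρ^{j+k} ∈ [0,∞]`. -/
def wnorm (ρ : ℝ) (f : FPS) : ENNReal :=
  ∑' p : ℕ × ℕ, ENNReal.ofReal (‖f p.1 p.2‖ * ρ ^ (p.1 + p.2))

/-- `D(f) = Σ_{n≥1} n f_n (z z̄)^n` for a series in `z z̄`. -/
def Dop (f : FPS) : FPS := fun j k => if j = k then (j : ℂ) * f j k else 0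

/-- `D̄(f − f₀) = Σ_{n≥1} (f_n/n) (z z̄)^n` for a series in `z z̄`. -/
def Dbar (f : FPS) : FPS := fun j k => if j = k ∧ j ≠ 0 then f j k / (j : ℂ) else 0

/-- The constant part `f₀` of a series. -/
def constPart (f : FPS) : FPS := fun j k => if j = 0 ∧ k = 0 then f 0 0 else 0

/-- `ξ₀ = ((λ⁻¹+1)z + (λ+1)z̄)/2`. -/
def xi0 (l : ℂ) : FPS := fun a b =>
  if a = 1 ∧ b = 0 then (l⁻¹ + 1) / 2 else if a = 0 ∧ b = 1 then (l + 1) / 2 else 0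

/-! All operators involved act coefficientwise or are ring operations on formal series. Since
`φ_z` and `h` have nonzero constant terms they can be divided out, and off the resonant
diagonals `∇E = id − Π` and `∇⁺E⁺ = id − Π₊`; so the left side reduces to
`Π₊(ℰ(q*,φ)·φ_z) − ∇⁺(h·Π(ψ/h))`. By the chain rule
`∂_z(S(φ⁻,φ)) = ∂₁S(φ⁻,φ)·∂_zφ⁻ + ∂₂S(φ⁻,φ)·φ_z`, whose first summand is `λ⁻¹(∂₁S(φ,φ⁺)·φ_z)⁻`,
and `Π₊` does not see the twist `λ⁻¹(·)⁻`; hence `Π₊(∂_z S(φ⁻,φ)) = Π₊(ℰ(q*,φ)·φ_z)`. -/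

/-- Coefficient functions of two-variable series are iterated power series `ℂ⟦z⟧⟦z̄⟧`; under this
identification `fmul` is the ring product and `d1` the derivative in the outer variable. -/
def toPS : FPS ≃ₗ[ℂ] PowerSeries (PowerSeries ℂ) where
  toFun f := PowerSeries.mk fun j => PowerSeries.mk (f j)
  invFun P j k := PowerSeries.coeff k (PowerSeries.coeff j P)
  map_add' f g := by ext j k; simp
  map_smul' c f := by ext j k; simp
  left_inv f := by ext j k; simp
  right_inv P := by ext j k; simp

lemma coeff_toPS (f : FPS) (j k : ℕ) :
    PowerSeries.coeff k (PowerSeries.coeff j (toPS f)) = f j k := by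
  simp [toPS]

lemma toPS_fmul (f g : FPS) : toPS (fmul f g) = toPS f * toPS g := by
  ext j k
  simp only [coeff_toPS, PowerSeries.coeff_mul, Finset.Nat.sum_antidiagonal_eq_sum_range_succ_mk,
    map_sum, fmul]

lemma toPS_oneF : toPS oneF = 1 := by
  ext j k
  rw [coeff_toPS, PowerSeries.coeff_one, oneF]
  split_ifs <;> simp_all [PowerSeries.coeff_one]

lemma fpow_zero (u : FPS) : fpow u 0 = oneF := rfl

lemma toPS_fpow (f : FPS) (m : ℕ) : toPS (fpow f m) = toPS f ^ m := by
  induction m with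
  | zero => exact toPS_oneF
  | succ m ih => rw [fpow, toPS_fmul, ih, pow_succ']

lemma toPS_d1 (f : FPS) : toPS (d1 f) = PowerSeries.derivative _ (toPS f) := by
  ext j k
  rw [coeff_toPS, PowerSeries.coeff_derivative,
    show ((j : PowerSeries ℂ) + 1) = PowerSeries.C ((j : ℂ) + 1) by simp,
    PowerSeries.coeff_mul_C]
  simp [d1, mul_comm, coeff_toPS]

lemma fmul_comm (f g : FPS) : fmul f g = fmul g f :=
  toPS.injective <| by simp only [toPS_fmul, mul_comm]

lemma fmul_assoc (f g h : FPS) : fmul (fmul f g) h = fmul f (fmul g h) :=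
  toPS.injective <| by simp only [toPS_fmul, mul_assoc]

lemma fmul_right_comm (f g h : FPS) : fmul (fmul f g) h = fmul (fmul f h) g :=
  toPS.injective <| by simp only [toPS_fmul, mul_right_comm]

lemma fmul_oneF (f : FPS) : fmul f oneF = f :=
  toPS.injective <| by simp only [toPS_fmul, toPS_oneF, mul_one]

lemma oneF_fmul (f : FPS) : fmul oneF f = f :=
  toPS.injective <| by simp only [toPS_fmul, toPS_oneF, one_mul]

lemma zero_fmul (g : FPS) : fmul 0 g = 0 :=
  toPS.injective <| by simp only [toPS_fmul, map_zero, zero_mul]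

lemma fmul_zero (f : FPS) : fmul f 0 = 0 :=
  toPS.injective <| by simp only [toPS_fmul, map_zero, mul_zero]

lemma fmul_sub (f g h : FPS) : fmul f (g - h) = fmul f g - fmul f h :=
  toPS.injective <| by simp only [toPS_fmul, map_sub, mul_sub]

lemma add_fmul (f g h : FPS) : fmul (f + g) h = fmul f h + fmul g h :=
  toPS.injective <| by simp only [toPS_fmul, map_add, add_mul]

lemma sub_fmul (f g h : FPS) : fmul (f - g) h = fmul f h - fmul g h :=
  toPS.injective <| by simp only [toPS_fmul, map_sub, sub_mul]

lemma fmul_smul (c : ℂ) (f g : FPS) : fmul f (c • g) = c • fmul f g :=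
  toPS.injective <| by simp only [toPS_fmul, map_smul, mul_smul_comm]

lemma smul_fmul (c : ℂ) (f g : FPS) : fmul (c • f) g = c • fmul f g :=
  toPS.injective <| by simp only [toPS_fmul, map_smul, smul_mul_assoc]

lemma sum_fmul {ι : Type*} (s : Finset ι) (f : ι → FPS) (g : FPS) :
    fmul (∑ i ∈ s, f i) g = ∑ i ∈ s, fmul (f i) g :=
  toPS.injective <| by simp only [toPS_fmul, map_sum, Finset.sum_mul]

lemma d1_fmul (f g : FPS) : d1 (fmul f g) = fmul (d1 f) g + fmul f (d1 g) :=
  toPS.injective <| by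
    simp only [toPS_d1, toPS_fmul, map_add, Derivation.leibniz, smul_eq_mul]
    ring

lemma d1_oneF : d1 oneF = 0 :=
  toPS.injective <| by simp only [toPS_d1, toPS_oneF, Derivation.map_one_eq_zero, map_zero]

lemma d1_fpow_succ (u : FPS) (m : ℕ) :
    d1 (fpow u (m + 1)) = ((m + 1 : ℕ) : ℂ) • fmul (fpow u m) (d1 u) :=
  toPS.injective <| by
    simp only [toPS_d1, toPS_fpow, toPS_fmul, Derivation.leibniz_pow,
      Nat.add_sub_cancel, smul_eq_mul, Nat.cast_smul_eq_nsmul, map_nsmul]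

lemma d1_smul (c : ℂ) (f : FPS) : d1 (c • f) = c • d1 f := by
  ext j k
  simp only [d1, Pi.smul_apply, smul_eq_mul]
  ring

lemma d1_sum {ι : Type*} (s : Finset ι) (f : ι → FPS) : d1 (∑ i ∈ s, f i) = ∑ i ∈ s, d1 (f i) :=
  toPS.injective <| by simp only [toPS_d1, map_sum]

/-- `f = O_m`. -/
def VanishesBelow (m : ℕ) (f : FPS) : Prop := ∀ a b, a + b < m → f a b = 0

lemma VanishesBelow.mono {m n : ℕ} {f : FPS} (hf : VanishesBelow m f) (hnm : n ≤ m) :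
    VanishesBelow n f :=
  fun a b hab => hf a b (by omega)

lemma VanishesBelow.smul {m : ℕ} {f : FPS} (hf : VanishesBelow m f) (c : ℂ) :
    VanishesBelow m (c • f) :=
  fun a b hab => by simp [hf a b hab]

lemma VanishesBelow.sum {ι : Type*} {s : Finset ι} {m : ℕ} {f : ι → FPS}
    (hf : ∀ i ∈ s, VanishesBelow m (f i)) : VanishesBelow m (∑ i ∈ s, f i) :=
  fun a b hab => by
    rw [Finset.sum_apply, Finset.sum_apply]
    exact Finset.sum_eq_zero fun i hi => hf i hi a b hab

lemma VanishesBelow.fmul {m n : ℕ} {f g : FPS} (hf : VanishesBelow m f) (hg : VanishesBelow n g) :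
    VanishesBelow (m + n) (fmul f g) := by
  intro j k hjk
  refine Finset.sum_eq_zero fun a ha => Finset.sum_eq_zero fun b hb => ?_
  rw [Finset.mem_range] at ha hb
  by_cases hab : a + b < m
  · rw [hf a b hab, zero_mul]
  · rw [hg (j - a) (k - b) (by omega), mul_zero]

lemma vanishesBelow_fpow {u : FPS} (hu : u 0 0 = 0) (m : ℕ) : VanishesBelow m (fpow u m) := by
  induction m with
  | zero => intro a b h; omega
  | succ m ih =>
    have hu1 : VanishesBelow 1 u := fun a b h => by
      obtain ⟨rfl, rfl⟩ : a = 0 ∧ b = 0 := by omega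
      exact hu
    have h := hu1.fmul ih
    rwa [Nat.add_comm 1 m] at h

lemma sum_range_apply_of_vanishesBelow {g : ℕ → FPS} (hg : ∀ m, VanishesBelow m (g m))
    {j k N : ℕ} (hN : j + k < N) :
    (∑ m ∈ Finset.range N, g m) j k = ∑ m ∈ Finset.range (j + k + 1), g m j k := by
  simp only [Finset.sum_apply]
  refine (Finset.sum_subset (Finset.range_subset_range.mpr hN) fun m _ hm => ?_).symm
  exact hg m j k (by simpa using hm)

lemma fmul_apply_congr_left {f f' : FPS} (g : FPS) {j k : ℕ}
    (h : ∀ a ≤ j, ∀ b ≤ k, f a b = f' a b) : fmul f g j k = fmul f' g j k :=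
  Finset.sum_congr rfl fun a ha => Finset.sum_congr rfl fun b hb => by
    rw [h a (by simpa [Nat.lt_succ_iff] using ha) b (by simpa [Nat.lt_succ_iff] using hb)]

/-- `1/(1 − r)` for `r` without constant term, truncated where the remaining terms vanish. -/
def geomSeries (r : FPS) : FPS := fun j k => ∑ m ∈ Finset.range (j + k + 1), fpow r m j k

lemma fmul_geomSeries {r : FPS} (hr : r 0 0 = 0) :
    fmul r (geomSeries r) = geomSeries r - oneF := by
  ext j k
  have hpow := vanishesBelow_fpow hr
  have htrunc : ∀ a ≤ j, ∀ b ≤ k,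
      geomSeries r a b = (∑ m ∈ Finset.range (j + k + 1), fpow r m) a b := fun a ha b hb =>
    (sum_range_apply_of_vanishesBelow hpow (by omega)).symm
  calc fmul r (geomSeries r) j k
      = fmul (∑ m ∈ Finset.range (j + k + 1), fpow r m) r j k := by
        rw [fmul_comm, fmul_apply_congr_left r htrunc]
    _ = ∑ m ∈ Finset.range (j + k + 1), fpow r (m + 1) j k := by
        rw [sum_fmul, Finset.sum_apply, Finset.sum_apply]
        exact Finset.sum_congr rfl fun m _ => by rw [fmul_comm]; rfl
    _ = (∑ m ∈ Finset.range (j + k + 2), fpow r m) j k - fpow r 0 j k := by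
        simp only [Finset.sum_range_succ' _ (j + k + 1), Finset.sum_apply,
          add_sub_cancel_right]
    _ = (geomSeries r - oneF) j k := by
        rw [sum_range_apply_of_vanishesBelow hpow (by omega)]
        rfl

lemma fmul_one_sub_geomSeries {r : FPS} (hr : r 0 0 = 0) :
    fmul (oneF - r) (geomSeries r) = oneF := by
  rw [sub_fmul, oneF_fmul, fmul_geomSeries hr, sub_sub_cancel]

lemma finv_eq_smul_geomSeries {h : FPS} (h0 : h 0 0 ≠ 0) :
    finv h = (h 0 0)⁻¹ • geomSeries (oneF - (h 0 0)⁻¹ • h) := by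
  have hr : (oneF - (h 0 0)⁻¹ • h) = fun a b => if a = 0 ∧ b = 0 then 0 else -(h a b) * (h 0 0)⁻¹ := by
    ext a b
    by_cases hab : a = 0 ∧ b = 0
    · obtain ⟨rfl, rfl⟩ := hab
      simp [oneF, h0]
    · simp [oneF, hab, mul_comm]
  rw [hr]
  rfl

lemma fmul_finv {h : FPS} (h0 : h 0 0 ≠ 0) : fmul h (finv h) = oneF := by
  set r := oneF - (h 0 0)⁻¹ • h with hr_def
  have hr : r 0 0 = 0 := by simp [r, oneF, h0]
  calc fmul h (finv h) = fmul ((h 0 0)⁻¹ • h) (geomSeries r) := by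
        rw [finv_eq_smul_geomSeries h0, fmul_smul, smul_fmul]
    _ = fmul (oneF - r) (geomSeries r) := by rw [hr_def, sub_sub_cancel]
    _ = oneF := fmul_one_sub_geomSeries hr

lemma fmul_fdiv_cancel {h : FPS} (h0 : h 0 0 ≠ 0) (f : FPS) : fmul h (fdiv f h) = f := by
  rw [fdiv, ← fmul_assoc, fmul_comm h f, fmul_assoc, fmul_finv h0, fmul_oneF]

lemma fdiv_fmul_cancel {h : FPS} (h0 : h 0 0 ≠ 0) (f : FPS) : fdiv (fmul h f) h = f := by
  rw [fdiv, fmul_right_comm, fmul_finv h0, oneF_fmul]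

def polySubst (F u v : FPS) (M N : ℕ) : FPS :=
  ∑ m ∈ Finset.range M, ∑ n ∈ Finset.range N, F m n • fmul (fpow u m) (fpow v n)

lemma subst2_apply_eq_polySubst (F : FPS) {u v : FPS} (hu : u 0 0 = 0) (hv : v 0 0 = 0)
    {j k M N : ℕ} (hM : j + k < M) (hN : j + k < N) :
    subst2 F u v j k = polySubst F u v M N j k := by
  have hterm : ∀ m n, VanishesBelow (m + n) (F m n • fmul (fpow u m) (fpow v n)) :=
    fun m n => ((vanishesBelow_fpow hu m).fmul (vanishesBelow_fpow hv n)).smul _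
  have hrow : ∀ m, VanishesBelow m (∑ n ∈ Finset.range N, F m n • fmul (fpow u m) (fpow v n)) :=
    fun m => VanishesBelow.sum fun n _ => (hterm m n).mono (by omega)
  rw [polySubst, sum_range_apply_of_vanishesBelow hrow hM]
  refine Finset.sum_congr rfl fun m _ => ?_
  rw [sum_range_apply_of_vanishesBelow (fun n => (hterm m n).mono (by omega)) hN]
  rfl

lemma d1_polySubst (F u v : FPS) (M N : ℕ) :
    d1 (polySubst F u v (M + 1) (N + 1)) =
      fmul (polySubst (d1 F) u v M (N + 1)) (d1 u) + fmul (polySubst (d2 F) u v (M + 1) N) (d1 v) := by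
  have hu_part : ∑ m ∈ Finset.range (M + 1), ∑ n ∈ Finset.range (N + 1),
      F m n • fmul (d1 (fpow u m)) (fpow v n) = fmul (polySubst (d1 F) u v M (N + 1)) (d1 u) := by
    rw [Finset.sum_range_succ', polySubst, sum_fmul]
    simp only [fpow_zero, d1_oneF, zero_fmul, smul_zero, Finset.sum_const_zero, add_zero]
    refine Finset.sum_congr rfl fun m _ => ?_
    rw [sum_fmul]
    refine Finset.sum_congr rfl fun n _ => ?_
    rw [d1_fpow_succ, smul_fmul, smul_fmul, smul_smul, fmul_right_comm, d1, mul_comm]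
  have hv_part : ∑ m ∈ Finset.range (M + 1), ∑ n ∈ Finset.range (N + 1),
      F m n • fmul (fpow u m) (d1 (fpow v n)) = fmul (polySubst (d2 F) u v (M + 1) N) (d1 v) := by
    rw [polySubst, sum_fmul]
    refine Finset.sum_congr rfl fun m _ => ?_
    rw [Finset.sum_range_succ', sum_fmul]
    simp only [fpow_zero, d1_oneF, fmul_zero, smul_zero, add_zero]
    refine Finset.sum_congr rfl fun n _ => ?_
    rw [d1_fpow_succ, fmul_smul, smul_fmul, smul_smul, fmul_assoc, d2, mul_comm]
  simp only [polySubst, d1_sum, d1_smul, d1_fmul, smul_add, Finset.sum_add_distrib, hu_part,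
    hv_part]

lemma d1_subst2 (F : FPS) {u v : FPS} (hu : u 0 0 = 0) (hv : v 0 0 = 0) :
    d1 (subst2 F u v) = fmul (subst2 (d1 F) u v) (d1 u) + fmul (subst2 (d2 F) u v) (d1 v) := by
  ext j k
  have hstab : ∀ G M N, j + k < M → j + k < N →
      ∀ a ≤ j, ∀ b ≤ k, polySubst G u v M N a b = subst2 G u v a b :=
    fun G M N hM hN a _ b _ => (subst2_apply_eq_polySubst G hu hv (by omega) (by omega)).symm
  calc d1 (subst2 F u v) j k = d1 (polySubst F u v (j + k + 1 + 1) (j + k + 1 + 1)) j k := by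
        simp only [d1]
        rw [subst2_apply_eq_polySubst F hu hv (M := j + k + 1 + 1) (N := j + k + 1 + 1)
          (by omega) (by omega)]
    _ = _ := by
        rw [d1_polySubst, Pi.add_apply, Pi.add_apply,
          fmul_apply_congr_left _ (hstab (d1 F) _ _ (by omega) (by omega)),
          fmul_apply_congr_left _ (hstab (d2 F) _ _ (by omega) (by omega))]
        rfl

section Twist

variable {l : ℂ}

lemma minus_fmul (hl0 : l ≠ 0) (f g : FPS) :
    minus l (fmul f g) = fmul (minus l f) (minus l g) := by
  ext j k
  simp only [minus, fmul, Finset.mul_sum]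
  refine Finset.sum_congr rfl fun a ha => Finset.sum_congr rfl fun b hb => ?_
  rw [Finset.mem_range] at ha hb
  have hexp : (k : ℤ) - j = ((b : ℤ) - a) + (((k - b : ℕ) : ℤ) - ((j - a : ℕ) : ℤ)) := by omega
  rw [hexp, zpow_add₀ hl0]
  ring

lemma minus_oneF : minus l oneF = oneF := by
  ext j k
  simp only [minus, oneF]
  split_ifs with h
  · simp [h.1, h.2]
  · simp

lemma minus_fpow (hl0 : l ≠ 0) (u : FPS) (m : ℕ) : minus l (fpow u m) = fpow (minus l u) m := by
  induction m with
  | zero => exact minus_oneF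
  | succ m ih => rw [fpow, fpow, minus_fmul hl0, ih]

lemma minus_subst2 (hl0 : l ≠ 0) (F u v : FPS) :
    minus l (subst2 F u v) = subst2 F (minus l u) (minus l v) := by
  ext j k
  simp only [subst2, ← minus_fpow hl0, ← minus_fmul hl0]
  simp only [minus, subst2, Finset.mul_sum]
  exact Finset.sum_congr rfl fun m _ => Finset.sum_congr rfl fun n _ => by ring

lemma minus_plus (hl0 : l ≠ 0) (f : FPS) : minus l (plus l f) = f := by
  ext j k
  simp only [minus, plus, ← mul_assoc, ← zpow_add₀ hl0]
  simp

lemma d1_minus (hl0 : l ≠ 0) (f : FPS) : d1 (minus l f) = l⁻¹ • minus l (d1 f) := by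
  ext j k
  simp only [d1, minus, Pi.smul_apply, smul_eq_mul]
  have hexp : (k : ℤ) - ((j + 1 : ℕ) : ℤ) = -1 + ((k : ℤ) - j) := by push_cast; ring
  rw [hexp, zpow_add₀ hl0, zpow_neg_one]
  ring

lemma Pip_smul_minus (hl0 : l ≠ 0) (f : FPS) : Pip (l⁻¹ • minus l f) = Pip f := by
  ext j k
  simp only [Pip, Pi.smul_apply, smul_eq_mul, minus]
  split_ifs with h
  · subst h
    rw [show ((j + 1 : ℕ) : ℤ) - j = 1 by push_cast; ring, zpow_one, inv_mul_cancel_left₀ hl0]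
  · rfl

end Twist

lemma zpow_ne_one_of_ne_zero {G : Type*} [DivisionMonoid G] {x : G}
    (hx : ∀ n : ℕ, 0 < n → x ^ n ≠ 1) {m : ℤ} (hm : m ≠ 0) : x ^ m ≠ 1 := by
  obtain ⟨n, rfl | rfl⟩ := Int.eq_nat_or_neg m
  · rw [zpow_natCast]
    exact hx n (by omega)
  · rw [zpow_neg, zpow_natCast, inv_ne_one]
    exact hx n (by omega)

section Diagonal

variable {l : ℂ}

lemma nab_Emin (hl0 : l ≠ 0) (hru : ∀ n : ℕ, 0 < n → l ^ n ≠ 1) (g : FPS) :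
    nab l (Emin l g) = g - Pim g := by
  ext j k
  simp only [nab, Emin, Pim, minus, Pi.sub_apply, Pi.smul_apply, smul_eq_mul]
  split_ifs with hjk
  · simp
  · have hD : l ^ ((k : ℤ) - j) - l⁻¹ ≠ 0 := fun h =>
      zpow_ne_one_of_ne_zero hru (m := (k : ℤ) - j + 1) (by omega) <| by
        rw [zpow_add_one₀ hl0, sub_eq_zero.mp h, inv_mul_cancel₀ hl0]
    rw [← sub_mul, mul_div_cancel₀ _ hD, sub_zero]

lemma nabPlus_Eplus (hl0 : l ≠ 0) (hru : ∀ n : ℕ, 0 < n → l ^ n ≠ 1) (g : FPS) :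
    nabPlus l (Eplus l g) = g - Pip g := by
  ext j k
  simp only [nabPlus, Eplus, Pip, plus, Pi.sub_apply, Pi.smul_apply, smul_eq_mul]
  split_ifs with hjk
  · simp
  · have hD : 1 - l ^ ((j : ℤ) - k + 1) ≠ 0 :=
      sub_ne_zero.mpr (zpow_ne_one_of_ne_zero hru (by omega)).symm
    rw [← mul_assoc, ← zpow_one_add₀ hl0, add_comm 1, ← one_sub_mul, mul_div_cancel₀ _ hD,
      sub_zero]

lemma Pim_sub_Pim (f : FPS) : Pim (f - Pim f) = 0 := by
  ext j k
  simp only [Pim, Pi.sub_apply, Pi.zero_apply]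
  split_ifs <;> simp

lemma Pip_sub_Pip (f : FPS) : Pip (f - Pip f) = 0 := by
  ext j k
  simp only [Pip, Pi.sub_apply, Pi.zero_apply]
  split_ifs <;> simp

lemma Pip_add (f g : FPS) : Pip (f + g) = Pip f + Pip g := by
  ext j k
  simp only [Pip, Pi.add_apply]
  split_ifs <;> simp

lemma nabPlus_sub (f g : FPS) : nabPlus l (f - g) = nabPlus l f - nabPlus l g := by
  ext j k
  simp only [nabPlus, plus, Pi.sub_apply, Pi.smul_apply, smul_eq_mul]
  ring

lemma nabPlus_neg (f : FPS) : nabPlus l (-f) = -nabPlus l f := by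
  ext j k
  simp only [nabPlus, plus, Pi.sub_apply, Pi.neg_apply, Pi.smul_apply, smul_eq_mul]
  ring

end Diagonal

lemma fmul_zero_zero (f g : FPS) : fmul f g 0 0 = f 0 0 * g 0 0 := by
  simp [fmul]

lemma subst2_zero_zero (F u v : FPS) : subst2 F u v 0 0 = F 0 0 := by
  simp [subst2, fpow, fmul, oneF]

lemma Sq_one_one (q : OPS) : Sq q 1 1 = (q 0 + 2 * q 2) / 4 := by
  simp only [Sq, fmul, substOne, halfSum, halfDiff, cosSeries, fpow, oneF,
    Finset.sum_range_succ, Finset.sum_range_zero]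
  norm_num [Nat.factorial, fpow_zero, oneF]
  ring

lemma hFun_zero_zero (l : ℂ) (q : OPS) {φ : FPS} (hφ : φ 1 0 = 1) :
    hFun l q φ 0 0 = (q 0 + 2 * q 2) / 4 := by
  simp [hFun, fmul_zero_zero, subst2_zero_zero, d1, d2, minus, hφ, Sq_one_one]

lemma Pip_Err_fmul_d1 {l : ℂ} (hl0 : l ≠ 0) (q : OPS) {φ : FPS} (hφ : φ 0 0 = 0) :
    Pip (fmul (Err l q φ) (d1 φ)) = Pip (d1 (subst2 (Sq q) (minus l φ) φ)) := by
  have hφm : minus l φ 0 0 = 0 := by simp [minus, hφ]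
  have hconj : fmul (subst2 (d1 (Sq q)) (minus l φ) φ) (minus l (d1 φ))
      = minus l (fmul (subst2 (d1 (Sq q)) φ (plus l φ)) (d1 φ)) := by
    rw [minus_fmul hl0, minus_subst2 hl0, minus_plus hl0]
  rw [d1_subst2 (Sq q) hφm hφ, d1_minus hl0, fmul_smul, hconj, Err, add_fmul, Pip_add, Pip_add,
    Pip_smul_minus hl0, add_comm]

theorem approximate_inner_solution_general
    (l : ℂ) (hl : ‖l‖ = 1) (hru : ∀ n : ℕ, 0 < n → l ^ n ≠ 1)
    (qs : OPS) (hq0 : qs 0 = 1) (hs0 : (1 + 2 * qs 2) / 4 ≠ (0 : ℂ))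
    (φ : FPS) (hφ : normalized φ) :
    nabPlus l (fmul (hFun l qs φ) (nab l (fdiv (wFun l qs φ) (d1 φ))))
        + fmul (Err l qs φ) (d1 φ) =
      Pip (d1 (subst2 (Sq qs) (minus l φ) φ))
        - nabPlus l (fmul (hFun l qs φ) (Pim (fdiv (psiFun l qs φ) (hFun l qs φ)))) := by
  obtain ⟨hφ0, hφ10, -⟩ := hφ
  have hl0 : l ≠ 0 := norm_ne_zero_iff.mp (by rw [hl]; exact one_ne_zero)
  have hφz : d1 φ 0 0 ≠ 0 := by simp [d1, hφ10]
  have hh : hFun l qs φ 0 0 ≠ 0 := by rwa [hFun_zero_zero l qs hφ10, hq0]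
  set g := fdiv (psiFun l qs φ) (hFun l qs φ)
  have hnab : nab l (fdiv (wFun l qs φ) (d1 φ)) = g - Pim g := by
    rw [wFun, fdiv_fmul_cancel hφz, nab_Emin hl0 hru, Pim_sub_Pim, sub_zero]
  have hψ : nabPlus l (psiFun l qs φ)
      = Pip (fmul (Err l qs φ) (d1 φ)) - fmul (Err l qs φ) (d1 φ) := by
    rw [psiFun, nabPlus_neg, nabPlus_Eplus hl0 hru, Pip_sub_Pip, sub_zero, neg_sub]
  rw [hnab, fmul_sub, fmul_fdiv_cancel hh, nabPlus_sub, hψ, Pip_Err_fmul_d1 hl0 qs hφ0]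
  abel

/-- With `w = φ_z·E(ψ/h − Π(ψ/h))`:
`∇⁺(h·∇(w/φ_z)) + ℰ(q*,φ)·φ_z = [z·∂_z(S_{q*}(φ⁻,φ))]/z − ∇⁺(h·Π(ψ/h))`. -/
theorem approximate_inner_solution
    (l : ℂ) (hl : ‖l‖ = 1) (hru : ∀ n : ℕ, 0 < n → l ^ n ≠ 1)
    (hl2 : l ^ 2 ≠ 1)
    (qs : OPS) (hq0 : qs 0 = 1) (hs0 : (1 + 2 * qs 2) / 4 ≠ (0 : ℂ))
    (φ : FPS) (hφ : normalized φ) (hsym : swapI φ = φ) :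
    nabPlus l (fmul (hFun l qs φ) (nab l (fdiv (wFun l qs φ) (d1 φ))))
        + fmul (Err l qs φ) (d1 φ) =
      Pip (d1 (subst2 (Sq qs) (minus l φ) φ))
        - nabPlus l (fmul (hFun l qs φ) (Pim (fdiv (psiFun l qs φ) (hFun l qs φ)))) :=
  approximate_inner_solution_general l hl hru qs hq0 hs0 φ hφ

end Treschev

end
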